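/- Let A be a uniform algebra on X and E ⊆ X a closed set such that the restriction algebra A|E is closed in C(E). Define A_E = {f ∈ C(X) : f|E ∈ A|E}. Then A_E is a closed subalgebra of C(X) containing A, and A_E is maximal in C(X) if and only if A|E is maximal in C(E). -/

import Mathlib

variable {X : Type} [TopologicalSpace X] [CompactSpace X] [T2Space X]

/-- Restriction to a subset `E ⊆ X`, as an algebra homomorphism `C(X, ℂ) →ₐ[ℂ] C(E, ℂ)`. -/
noncomputable def restrictHom (E : Set X) : C(X, ℂ) →ₐ[ℂ] C(E, ℂ) :=
  ContinuousMap.compRightAlgHom ℂ ℂ ⟨Subtype.val, continuous_subtype_val⟩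

/-- A closed subalgebra `B` of `C(Y, ℂ)` is maximal if it is proper and there is no
closed subalgebra strictly between `B` and `C(Y, ℂ)`. -/
def MaximalIn {Y : Type} [TopologicalSpace Y] (B : Subalgebra ℂ C(Y, ℂ)) : Prop :=
  B ≠ ⊤ ∧ ∀ D : Subalgebra ℂ C(Y, ℂ), IsClosed (D : Set C(Y, ℂ)) → B ≤ D →
    D = B ∨ D = ⊤

/-!
Restriction `C(X) → C(E)` is a continuous surjection of Banach spaces (Tietze), hence by the open
mapping theorem a quotient map. Pulling back along a surjective quotient map `φ` of algebras is
an order isomorphism from the closed subalgebras of `C(E)` onto the closed subalgebras of `C(X)`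
containing `ker φ`, so it preserves and reflects maximality.
-/

theorem Subalgebra.comap_injective_of_surjective {R A B : Type*} [CommSemiring R] [Semiring A]
    [Algebra R A] [Semiring B] [Algebra R B] {f : A →ₐ[R] B} (hf : Function.Surjective f) :
    Function.Injective (Subalgebra.comap f) := fun S T hST => by
  rw [← map_comap_eq_self_of_surjective hf S, hST, map_comap_eq_self_of_surjective hf T]

theorem maximalIn_comap_iff {Y Z : Type} [TopologicalSpace Y] [TopologicalSpace Z]
    {φ : C(Y, ℂ) →ₐ[ℂ] C(Z, ℂ)} (hφ : Topology.IsQuotientMap φ) (B : Subalgebra ℂ C(Z, ℂ)) :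
    MaximalIn (B.comap φ) ↔ MaximalIn B := by
  have comap_inj := Subalgebra.comap_injective_of_surjective hφ.surjective
  have comap_eq_top {D : Subalgebra ℂ C(Z, ℂ)} : D.comap φ = ⊤ ↔ D = ⊤ := by
    rw [← Algebra.comap_top φ, comap_inj.eq_iff]
  constructor
  · rintro ⟨hne, hmax⟩
    refine ⟨mt comap_eq_top.2 hne, fun D hD hBD => ?_⟩
    rcases hmax (D.comap φ) (hD.preimage hφ.continuous) fun _ hf => hBD hf with h | h
    · exact .inl (comap_inj h)
    · exact .inr (comap_eq_top.1 h)
  · rintro ⟨hne, hmax⟩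
    refine ⟨mt comap_eq_top.1 hne, fun D hD hBD => ?_⟩
    -- `D` contains the kernel of `φ`, so it is the preimage of its image.
    have hsat : (D.map φ).comap φ = D := Subalgebra.comap_map_eq_self fun f hf =>
      hBD (show φ f ∈ B by rw [Set.mem_preimage.1 hf]; exact zero_mem B)
    have hmap_closed : IsClosed ((D.map φ : Subalgebra ℂ C(Z, ℂ)) : Set C(Z, ℂ)) := by
      rw [← hφ.isClosed_preimage, ← Subalgebra.coe_comap, hsat]
      exact hD
    have hBle : B ≤ D.map φ := by
      rw [← Subalgebra.map_comap_eq_self_of_surjective hφ.surjective B]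
      exact Subalgebra.map_mono hBD
    rcases hmax _ hmap_closed hBle with h | h
    · exact .inl (by rw [← hsat, h])
    · exact .inr (by rw [← hsat, h, Algebra.comap_top])

theorem isQuotientMap_restrictHom {E : Set X} (hE : IsClosed E) :
    Topology.IsQuotientMap (restrictHom E) := by
  have : CompactSpace E := isCompact_iff_compactSpace.mp hE.isCompact
  let restrictCLM : C(X, ℂ) →L[ℂ] C(E, ℂ) :=
    { toLinearMap := (restrictHom E).toLinearMap
      cont := ContinuousMap.compRightAlgHom_continuous ℂ ℂ _ }
  exact restrictCLM.isQuotientMap fun g => ContinuousMap.exists_restrict_eq hE g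

theorem stmt_11_general (A : Subalgebra ℂ C(X, ℂ))
    (E : Set X) (hE : IsClosed E)
    (hAEclosed : IsClosed ((A.map (restrictHom E) : Subalgebra ℂ C(E, ℂ)) : Set C(E, ℂ))) :
    A ≤ (A.map (restrictHom E)).comap (restrictHom E) ∧
    IsClosed (((A.map (restrictHom E)).comap (restrictHom E) : Subalgebra ℂ C(X, ℂ)) :
      Set C(X, ℂ)) ∧
    (MaximalIn ((A.map (restrictHom E)).comap (restrictHom E)) ↔
      MaximalIn (A.map (restrictHom E))) := by
  have hquot := isQuotientMap_restrictHom hE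
  exact ⟨fun f hf => ⟨f, hf, rfl⟩, hAEclosed.preimage hquot.continuous,
    maximalIn_comap_iff hquot _⟩

/-- For a closed set `E` with `A|E` closed in `C(E)`: the algebra
`A_E = {f ∈ C(X) : f|E ∈ A|E}` contains `A`, is closed, and is maximal in `C(X)` iff
`A|E` is maximal in `C(E)`. -/
theorem stmt_11 (A : Subalgebra ℂ C(X, ℂ))
    (hclosed : IsClosed (A : Set C(X, ℂ)))
    (hsep : ∀ x y : X, x ≠ y → ∃ f ∈ A, f x ≠ f y)
    (E : Set X) (hE : IsClosed E)
    (hAEclosed : IsClosed ((A.map (restrictHom E) : Subalgebra ℂ C(E, ℂ)) : Set C(E, ℂ)))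
    (hAEproper : A.map (restrictHom E) ≠ ⊤) :
    A ≤ (A.map (restrictHom E)).comap (restrictHom E) ∧
    IsClosed (((A.map (restrictHom E)).comap (restrictHom E) : Subalgebra ℂ C(X, ℂ)) :
      Set C(X, ℂ)) ∧
    (MaximalIn ((A.map (restrictHom E)).comap (restrictHom E)) ↔
      MaximalIn (A.map (restrictHom E))) :=
  stmt_11_general A E hE hAEclosed
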